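/- Let K = ⟨T,A⟩ be an ELHI_¬ knowledge base whose TBox T is classically consistent and let q be a Boolean conjunctive query. If K ⊨_brave q (i.e., ⟨T,A'⟩ ⊨ q for some repair A' of K), then K ⊨₄ q. -/

import Mathlib

namespace Para

/-! ### Syntax -/

inductive Role (RN : Type) : Type where
  | name : RN → Role RN
  | inv  : RN → Role RN

inductive Concept (CN RN : Type) : Type where
  | top   : Concept CN RN
  | atom  : CN → Concept CN RN
  | neg   : Concept CN RN → Concept CN RN
  | tri   : Concept CN RN → Concept CN RN
  | inter : Concept CN RN → Concept CN RN → Concept CN RN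
  | all   : Role RN → Concept CN RN → Concept CN RN

namespace Concept
variable {CN RN : Type}
def bot : Concept CN RN := neg top
def union (C D : Concept CN RN) : Concept CN RN := neg (inter (neg C) (neg D))
def ex (S : Role RN) (C : Concept CN RN) : Concept CN RN := neg (all S (neg C))
end Concept

inductive DLAxiom (CN RN : Type) : Type where
  | cinc : Concept CN RN → Concept CN RN → DLAxiom CN RN
  | rinc : Role RN → Role RN → DLAxiom CN RN

inductive Assertion (CN RN IN : Type) : Type where
  | ca : CN → IN → Assertion CN RN IN
  | ra : RN → IN → IN → Assertion CN RN IN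

inductive Frm (CN RN IN : Type) : Type where
  | ax : DLAxiom CN RN → Frm CN RN IN
  | assert : Assertion CN RN IN → Frm CN RN IN

/-! ### Four-valued interpretations -/

structure FourInterp (CN RN IN : Type) : Type 1 where
  Dom : Type
  dom_nonempty : Nonempty Dom
  cpos : CN → Set Dom
  cneg : CN → Set Dom
  rext : RN → Set (Dom × Dom)
  ind : IN → Dom

variable {CN RN IN V : Type}

def FourInterp.rInterp (I : FourInterp CN RN IN) : Role RN → Set (I.Dom × I.Dom)
  | .name R => I.rext R
  | .inv R  => {p | (p.2, p.1) ∈ I.rext R}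

/-- Positive and negative extensions of a concept, as a pair. -/
def FourInterp.ext (I : FourInterp CN RN IN) : Concept CN RN → Set I.Dom × Set I.Dom
  | .top => (Set.univ, ∅)
  | .atom A => (I.cpos A, I.cneg A)
  | .neg C => ((I.ext C).2, (I.ext C).1)
  | .tri C => ((I.ext C).1, ((I.ext C).1)ᶜ)
  | .inter C D => ((I.ext C).1 ∩ (I.ext D).1, (I.ext C).2 ∪ (I.ext D).2)
  | .all S C => ({x | ∀ y, (x, y) ∈ I.rInterp S → y ∈ (I.ext C).1},
                 {x | ∃ y, (x, y) ∈ I.rInterp S ∧ y ∈ (I.ext C).2})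

def FourInterp.pExt (I : FourInterp CN RN IN) (C : Concept CN RN) : Set I.Dom := (I.ext C).1
def FourInterp.nExt (I : FourInterp CN RN IN) (C : Concept CN RN) : Set I.Dom := (I.ext C).2

def FourInterp.satAx (I : FourInterp CN RN IN) : DLAxiom CN RN → Prop
  | .cinc C D => I.pExt C ⊆ I.pExt D
  | .rinc S S' => I.rInterp S ⊆ I.rInterp S'

def FourInterp.satAssert (I : FourInterp CN RN IN) : Assertion CN RN IN → Prop
  | .ca A a => I.ind a ∈ I.cpos A
  | .ra R a b => (I.ind a, I.ind b) ∈ I.rext R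

def FourInterp.satFrm (I : FourInterp CN RN IN) : Frm CN RN IN → Prop
  | .ax ax => I.satAx ax
  | .assert α => I.satAssert α

/-! ### Classical interpretations -/

structure ClassInterp (CN RN IN : Type) : Type 1 where
  Dom : Type
  dom_nonempty : Nonempty Dom
  cext : CN → Set Dom
  rext : RN → Set (Dom × Dom)
  ind : IN → Dom

def ClassInterp.rInterp (J : ClassInterp CN RN IN) : Role RN → Set (J.Dom × J.Dom)
  | .name R => J.rext R
  | .inv R  => {p | (p.2, p.1) ∈ J.rext R}

def ClassInterp.ext (J : ClassInterp CN RN IN) : Concept CN RN → Set J.Dom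
  | .top => Set.univ
  | .atom A => J.cext A
  | .neg C => (J.ext C)ᶜ
  | .tri C => J.ext C
  | .inter C D => J.ext C ∩ J.ext D
  | .all S C => {x | ∀ y, (x, y) ∈ J.rInterp S → y ∈ J.ext C}

def ClassInterp.satAx (J : ClassInterp CN RN IN) : DLAxiom CN RN → Prop
  | .cinc C D => J.ext C ⊆ J.ext D
  | .rinc S S' => J.rInterp S ⊆ J.rInterp S'

def ClassInterp.satAssert (J : ClassInterp CN RN IN) : Assertion CN RN IN → Prop
  | .ca A a => J.ind a ∈ J.cext A
  | .ra R a b => (J.ind a, J.ind b) ∈ J.rext R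

def ClassInterp.satFrm (J : ClassInterp CN RN IN) : Frm CN RN IN → Prop
  | .ax ax => J.satAx ax
  | .assert α => J.satAssert α

/-! ### Knowledge bases -/

structure KB (CN RN IN : Type) : Type where
  tbox : Set (DLAxiom CN RN)
  abox : Set (Assertion CN RN IN)
  tbox_finite : tbox.Finite
  abox_finite : abox.Finite

def FourInterp.satKB (I : FourInterp CN RN IN) (K : KB CN RN IN) : Prop :=
  (∀ ax ∈ K.tbox, I.satAx ax) ∧ (∀ α ∈ K.abox, I.satAssert α)

def ClassInterp.satKB (J : ClassInterp CN RN IN) (K : KB CN RN IN) : Prop :=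
  (∀ ax ∈ K.tbox, J.satAx ax) ∧ (∀ α ∈ K.abox, J.satAssert α)

def fourEntailsFrm (K : KB CN RN IN) (φ : Frm CN RN IN) : Prop :=
  ∀ I : FourInterp CN RN IN, I.satKB K → I.satFrm φ

def clEntailsFrm (K : KB CN RN IN) (φ : Frm CN RN IN) : Prop :=
  ∀ J : ClassInterp CN RN IN, J.satKB K → J.satFrm φ


/-! ### Negation normal form -/

inductive IsNNF {CN RN : Type} : Concept CN RN → Prop where
  | top : IsNNF Concept.top
  | bot : IsNNF Concept.bot
  | atom (A : CN) : IsNNF (Concept.atom A)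
  | negAtom (A : CN) : IsNNF (Concept.neg (Concept.atom A))
  | triAtom (A : CN) : IsNNF (Concept.tri (Concept.atom A))
  | triNegAtom (A : CN) : IsNNF (Concept.tri (Concept.neg (Concept.atom A)))
  | negTriAtom (A : CN) : IsNNF (Concept.neg (Concept.tri (Concept.atom A)))
  | negTriNegAtom (A : CN) : IsNNF (Concept.neg (Concept.tri (Concept.neg (Concept.atom A))))
  | inter {C D : Concept CN RN} : IsNNF C → IsNNF D → IsNNF (Concept.inter C D)
  | union {C D : Concept CN RN} : IsNNF C → IsNNF D → IsNNF (Concept.union C D)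
  | all {C : Concept CN RN} (S : Role RN) : IsNNF C → IsNNF (Concept.all S C)
  | ex {C : Concept CN RN} (S : Role RN) : IsNNF C → IsNNF (Concept.ex S C)

def AxInNNF : DLAxiom CN RN → Prop
  | .cinc C D => IsNNF C ∧ IsNNF D
  | .rinc _ _ => True

def FrmInNNF : Frm CN RN IN → Prop
  | .ax ax => AxInNNF ax
  | .assert _ => True

def KBInNNF (K : KB CN RN IN) : Prop := ∀ ax ∈ K.tbox, AxInNNF ax

/-! ### Classical counterpart translation (for concepts in NNF) -/

def clConcept {CN RN : Type} : Concept CN RN → Concept (CN ⊕ CN) RN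
  | .atom A => .atom (.inl A)
  | .neg (.atom A) => .atom (.inr A)
  | .tri (.atom A) => .atom (.inl A)
  | .tri (.neg (.atom A)) => .atom (.inr A)
  | .neg (.tri (.atom A)) => .neg (.atom (.inl A))
  | .neg (.tri (.neg (.atom A))) => .neg (.atom (.inr A))
  | .top => .top
  | .neg .top => .neg .top
  | .neg (.inter (.neg C) (.neg D)) => Concept.union (clConcept C) (clConcept D)
  | .neg (.all S (.neg C)) => Concept.ex S (clConcept C)
  | .inter C D => .inter (clConcept C) (clConcept D)
  | .all S C => .all S (clConcept C)
  | _ => .top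

def clAxiom : DLAxiom CN RN → DLAxiom (CN ⊕ CN) RN
  | .cinc C D => .cinc (clConcept C) (clConcept D)
  | .rinc S S' => .rinc S S'

def clAssertion : Assertion CN RN IN → Assertion (CN ⊕ CN) RN IN
  | .ca A a => .ca (.inl A) a
  | .ra R a b => .ra R a b

def clFrm : Frm CN RN IN → Frm (CN ⊕ CN) RN IN
  | .ax ax => .ax (clAxiom ax)
  | .assert α => .assert (clAssertion α)

def clKB (K : KB CN RN IN) : KB (CN ⊕ CN) RN IN where
  tbox := clAxiom '' K.tbox
  abox := clAssertion '' K.abox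
  tbox_finite := K.tbox_finite.image _
  abox_finite := K.abox_finite.image _

/-- The classical counterpart `I^cl` of a 4-interpretation. -/
def FourInterp.toClassical (I : FourInterp CN RN IN) : ClassInterp (CN ⊕ CN) RN IN where
  Dom := I.Dom
  dom_nonempty := I.dom_nonempty
  cext := Sum.elim I.cpos I.cneg
  rext := I.rext
  ind := I.ind

/-- The 4-counterpart of a classical interpretation over names `A⁺, A⁻`. -/
def ClassInterp.toFour (J : ClassInterp (CN ⊕ CN) RN IN) : FourInterp CN RN IN where
  Dom := J.Dom
  dom_nonempty := J.dom_nonempty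
  cpos := fun A => J.cext (.inl A)
  cneg := fun A => J.cext (.inr A)
  rext := J.rext
  ind := J.ind

/-! ### The △-prefixing translation -/

def triConcept : Concept CN RN → Concept CN RN
  | .top => .top
  | .atom A => .tri (.atom A)
  | .neg C => .neg (triConcept C)
  | .tri C => .tri (triConcept C)
  | .inter C D => .inter (triConcept C) (triConcept D)
  | .all S C => .all S (triConcept C)

def TriFree : Concept CN RN → Prop
  | .top => True
  | .atom _ => True
  | .neg C => TriFree C
  | .tri _ => False
  | .inter C D => TriFree C ∧ TriFree D
  | .all _ C => TriFree C

def AxTriFree : DLAxiom CN RN → Prop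
  | .cinc C D => TriFree C ∧ TriFree D
  | .rinc _ _ => True

def FrmTriFree : Frm CN RN IN → Prop
  | .ax ax => AxTriFree ax
  | .assert _ => True

def KBTriFree (K : KB CN RN IN) : Prop := ∀ ax ∈ K.tbox, AxTriFree ax

def triAxiom : DLAxiom CN RN → DLAxiom CN RN
  | .cinc C D => .cinc (triConcept C) (triConcept D)
  | .rinc S S' => .rinc S S'

def triFrm : Frm CN RN IN → Frm CN RN IN
  | .ax ax => .ax (triAxiom ax)
  | .assert α => .assert α

def triKB (K : KB CN RN IN) : KB CN RN IN where
  tbox := triAxiom '' K.tbox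
  abox := K.abox
  tbox_finite := K.tbox_finite.image _
  abox_finite := K.abox_finite

/-! ### Removing △ -/

def flatConcept : Concept CN RN → Concept CN RN
  | .top => .top
  | .atom A => .atom A
  | .neg C => .neg (flatConcept C)
  | .tri C => flatConcept C
  | .inter C D => .inter (flatConcept C) (flatConcept D)
  | .all S C => .all S (flatConcept C)

def flatAxiom : DLAxiom CN RN → DLAxiom CN RN
  | .cinc C D => .cinc (flatConcept C) (flatConcept D)
  | .rinc S S' => .rinc S S'

def flatKB (K : KB CN RN IN) : KB CN RN IN where
  tbox := flatAxiom '' K.tbox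
  abox := K.abox
  tbox_finite := K.tbox_finite.image _
  abox_finite := K.abox_finite

/-! ### ELHI_¬ knowledge bases -/

def AtomTop (C : Concept CN RN) : Prop := C = Concept.top ∨ ∃ A, C = Concept.atom A

def AtomTopBot (C : Concept CN RN) : Prop :=
  C = Concept.top ∨ C = Concept.bot ∨ ∃ A, C = Concept.atom A

def IsELHInegAxiom : DLAxiom CN RN → Prop
  | .rinc _ _ => True
  | .cinc L M =>
      (AtomTop L ∧ ∃ S B, AtomTop B ∧ M = Concept.ex S B) ∨
      ((∃ S A, AtomTop A ∧ L = Concept.ex S A) ∧ AtomTopBot M) ∨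
      ((∃ A B, AtomTop A ∧ AtomTop B ∧ L = Concept.inter A B) ∧ AtomTopBot M) ∨
      (AtomTop L ∧ ∃ B, AtomTop B ∧ M = Concept.neg B)

def IsELHInegKB (K : KB CN RN IN) : Prop := ∀ ax ∈ K.tbox, IsELHInegAxiom ax

/-- `K⁺`: drop all concept inclusions of the weak-disjointness form `A ⊑ ¬B`
(`B` a concept name; note that in `ELHI_¬` the derived constructors `∃S.B` and
`⊥` are not of this form). -/
def KPlus (K : KB CN RN IN) : KB CN RN IN where
  tbox := {ax ∈ K.tbox |
    ∀ (L : Concept CN RN) (B : CN), ax ≠ DLAxiom.cinc L (Concept.neg (Concept.atom B))}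
  abox := K.abox
  tbox_finite := K.tbox_finite.subset (Set.sep_subset _ _)
  abox_finite := K.abox_finite

/-! ### Conjunctive queries -/

inductive Term (V IN : Type) : Type where
  | var : V → Term V IN
  | ind : IN → Term V IN

structure CQ (CN RN IN V : Type) : Type where
  roleAtoms : Set (RN × Term V IN × Term V IN)
  concAtoms : Set (CN × Term V IN)
  roleAtoms_finite : roleAtoms.Finite
  concAtoms_finite : concAtoms.Finite

def FourInterp.cqMatch (I : FourInterp CN RN IN) (q : CQ CN RN IN V)
    (π : Term V IN → I.Dom) : Prop :=
  (∀ c : IN, π (Term.ind c) = I.ind c) ∧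
  (∀ p ∈ q.roleAtoms, (π p.2.1, π p.2.2) ∈ I.rext p.1) ∧
  (∀ p ∈ q.concAtoms, π p.2 ∈ I.cpos p.1)

def ClassInterp.cqMatch (J : ClassInterp CN RN IN) (q : CQ CN RN IN V)
    (π : Term V IN → J.Dom) : Prop :=
  (∀ c : IN, π (Term.ind c) = J.ind c) ∧
  (∀ p ∈ q.roleAtoms, (π p.2.1, π p.2.2) ∈ J.rext p.1) ∧
  (∀ p ∈ q.concAtoms, π p.2 ∈ J.cext p.1)

def fourEntailsCQ (K : KB CN RN IN) (q : CQ CN RN IN V) : Prop :=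
  ∀ I : FourInterp CN RN IN, I.satKB K → ∃ π, I.cqMatch q π

def clEntailsCQ (K : KB CN RN IN) (q : CQ CN RN IN V) : Prop :=
  ∀ J : ClassInterp CN RN IN, J.satKB K → ∃ π, J.cqMatch q π

/-! ### Conjunctive queries with values -/

inductive TVal : Type where
  | T | B | N | F

structure CQV (CN RN IN V : Type) : Type where
  roleAtoms : Set (RN × Term V IN × Term V IN)
  concAtoms : Set (CN × Term V IN)
  valAtoms : Set (TVal × CN × Term V IN)
  roleAtoms_finite : roleAtoms.Finite
  concAtoms_finite : concAtoms.Finite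
  valAtoms_finite : valAtoms.Finite

namespace CQV

def atV (q : CQV CN RN IN V) (X : TVal) : Set (CN × Term V IN) :=
  {p | (X, p.1, p.2) ∈ q.valAtoms}

theorem atV_finite (q : CQV CN RN IN V) (X : TVal) : (q.atV X).Finite := by
  have h : q.atV X ⊆ (fun w : TVal × CN × Term V IN => (w.2.1, w.2.2)) '' q.valAtoms := by
    rintro ⟨A, t⟩ h
    exact ⟨(X, A, t), h, rfl⟩
  exact (q.valAtoms_finite.image _).subset h

def atPlus (q : CQV CN RN IN V) : Set (CN × Term V IN) :=
  q.concAtoms ∪ q.atV TVal.T ∪ q.atV TVal.B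

def atBF (q : CQV CN RN IN V) : Set (CN × Term V IN) := q.atV TVal.B ∪ q.atV TVal.F
def atTN (q : CQV CN RN IN V) : Set (CN × Term V IN) := q.atV TVal.T ∪ q.atV TVal.N
def atFN (q : CQV CN RN IN V) : Set (CN × Term V IN) := q.atV TVal.F ∪ q.atV TVal.N

theorem atPlus_finite (q : CQV CN RN IN V) : q.atPlus.Finite :=
  (q.concAtoms_finite.union (q.atV_finite TVal.T)).union (q.atV_finite TVal.B)

theorem atBF_finite (q : CQV CN RN IN V) : q.atBF.Finite :=
  (q.atV_finite TVal.B).union (q.atV_finite TVal.F)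

end CQV

/-- Item 1 of the definition of answers: the match required in every 4-model. -/
def FourInterp.cqvMatch1 (I : FourInterp CN RN IN) (q : CQV CN RN IN V)
    (π : Term V IN → I.Dom) : Prop :=
  (∀ c : IN, π (Term.ind c) = I.ind c) ∧
  (∀ p ∈ q.roleAtoms, (π p.2.1, π p.2.2) ∈ I.rext p.1) ∧
  (∀ p ∈ q.atPlus, π p.2 ∈ I.cpos p.1) ∧
  (∀ p ∈ q.atBF, π p.2 ∈ I.cneg p.1)

/-- Item 2: the extra conditions required of a match in some 4-model. -/
def FourInterp.cqvMatch2 (I : FourInterp CN RN IN) (q : CQV CN RN IN V)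
    (π : Term V IN → I.Dom) : Prop :=
  (∀ p ∈ q.atTN, π p.2 ∉ I.cneg p.1) ∧
  (∀ p ∈ q.atFN, π p.2 ∉ I.cpos p.1)

def fourEntailsCQV (K : KB CN RN IN) (q : CQV CN RN IN V) : Prop :=
  (∀ I : FourInterp CN RN IN, I.satKB K → ∃ π, I.cqvMatch1 q π) ∧
  (∃ I : FourInterp CN RN IN, I.satKB K ∧ ∃ π, I.cqvMatch1 q π ∧ I.cqvMatch2 q π)


/-! ### The flattened query `q^♭` (T ↦ positive atom, F ↦ negated atom) -/

def ClassInterp.flatMatch (J : ClassInterp CN RN IN) (q : CQV CN RN IN V)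
    (π : Term V IN → J.Dom) : Prop :=
  (∀ c : IN, π (Term.ind c) = J.ind c) ∧
  (∀ p ∈ q.roleAtoms, (π p.2.1, π p.2.2) ∈ J.rext p.1) ∧
  (∀ p ∈ q.concAtoms ∪ q.atV TVal.T, π p.2 ∈ J.cext p.1) ∧
  (∀ p ∈ q.atV TVal.F, π p.2 ∉ J.cext p.1)

def clEntailsFlat (K : KB CN RN IN) (q : CQV CN RN IN V) : Prop :=
  ∀ J : ClassInterp CN RN IN, J.satKB K → ∃ π, J.flatMatch q π

/-! ### Reduction to classical query answering (Theorem queryreduction ingredients) -/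

/-- `c_t`: the fresh individual name associated to a term. -/
def Term.toInd : Term V IN → IN ⊕ V
  | .ind c => Sum.inl c
  | .var x => Sum.inr x

/-- `q⁺`, a conjunctive query over the names `A⁺ = inl A`, `A⁻ = inr A`. -/
def qPlus (q : CQV CN RN IN V) : CQ (CN ⊕ CN) RN IN V where
  roleAtoms := q.roleAtoms
  concAtoms := (fun p : CN × Term V IN => ((Sum.inl p.1 : CN ⊕ CN), p.2)) '' q.atPlus ∪
               (fun p : CN × Term V IN => ((Sum.inr p.1 : CN ⊕ CN), p.2)) '' q.atBF
  roleAtoms_finite := q.roleAtoms_finite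
  concAtoms_finite := (q.atPlus_finite.image _).union (q.atBF_finite.image _)

/-- The ABox `A_q` freezing the query `q⁺`, over individual names `IN ⊕ V`. -/
def aboxQ (q : CQV CN RN IN V) : Set (Assertion (CN ⊕ CN) RN (IN ⊕ V)) :=
  (fun p : RN × Term V IN × Term V IN =>
      Assertion.ra p.1 p.2.1.toInd p.2.2.toInd) '' (qPlus q).roleAtoms ∪
  (fun p : (CN ⊕ CN) × Term V IN =>
      Assertion.ca p.1 p.2.toInd) '' (qPlus q).concAtoms

theorem aboxQ_finite (q : CQV CN RN IN V) : (aboxQ q).Finite :=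
  ((qPlus q).roleAtoms_finite.image _).union ((qPlus q).concAtoms_finite.image _)

/-- The ground atoms of the disjunction `q_ctr`. -/
def ctrAtoms (q : CQV CN RN IN V) : Set ((CN ⊕ CN) × (IN ⊕ V)) :=
  (fun p : CN × Term V IN => ((Sum.inr p.1 : CN ⊕ CN), p.2.toInd)) '' q.atTN ∪
  (fun p : CN × Term V IN => ((Sum.inl p.1 : CN ⊕ CN), p.2.toInd)) '' q.atFN

/-- Classical entailment of a disjunction of ground concept atoms. -/
def clEntailsDisj {CN' IN' : Type} (K : KB CN' RN IN') (G : Set (CN' × IN')) : Prop :=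
  ∀ J : ClassInterp CN' RN IN', J.satKB K → ∃ g ∈ G, J.ind g.2 ∈ J.cext g.1

/-- Re-index the individual names of an assertion along `Sum.inl`. -/
def Assertion.extendInd : Assertion CN RN IN → Assertion CN RN (IN ⊕ V)
  | .ca A a => .ca A (Sum.inl a)
  | .ra R a b => .ra R (Sum.inl a) (Sum.inl b)

/-- Re-index a KB to the enlarged set of individual names `IN ⊕ V`,
and add a further finite ABox. -/
def KB.extendWith (K : KB CN RN IN) (A2 : Set (Assertion CN RN (IN ⊕ V)))
    (h : A2.Finite) : KB CN RN (IN ⊕ V) where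
  tbox := K.tbox
  abox := (Assertion.extendInd '' K.abox) ∪ A2
  tbox_finite := K.tbox_finite
  abox_finite := (K.abox_finite.image _).union h

/-! ### Repair-based semantics -/

def clConsistentS (T : Set (DLAxiom CN RN)) (A : Set (Assertion CN RN IN)) : Prop :=
  ∃ J : ClassInterp CN RN IN, (∀ ax ∈ T, J.satAx ax) ∧ (∀ α ∈ A, J.satAssert α)

def clEntailsAssertS (T : Set (DLAxiom CN RN)) (A : Set (Assertion CN RN IN))
    (φ : Assertion CN RN IN) : Prop :=
  ∀ J : ClassInterp CN RN IN,
    ((∀ ax ∈ T, J.satAx ax) ∧ (∀ α ∈ A, J.satAssert α)) → J.satAssert φ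

def clEntailsCQS (T : Set (DLAxiom CN RN)) (A : Set (Assertion CN RN IN))
    (q : CQ CN RN IN V) : Prop :=
  ∀ J : ClassInterp CN RN IN,
    ((∀ ax ∈ T, J.satAx ax) ∧ (∀ α ∈ A, J.satAssert α)) → ∃ π, J.cqMatch q π

/-- A repair: an inclusion-maximal subset of the ABox consistent with the TBox. -/
def IsRepair (K : KB CN RN IN) (A' : Set (Assertion CN RN IN)) : Prop :=
  A' ⊆ K.abox ∧ clConsistentS K.tbox A' ∧
  ∀ A'' : Set (Assertion CN RN IN),
    A' ⊆ A'' → A'' ⊆ K.abox → clConsistentS K.tbox A'' → A'' = A'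

/-- The closure `C*_T(A)`. -/
def Cstar (K : KB CN RN IN) : Set (Assertion CN RN IN) :=
  {φ | ∃ A', A' ⊆ K.abox ∧ clConsistentS K.tbox A' ∧ clEntailsAssertS K.tbox A' φ}

/-- Closed repairs. -/
def IsClosedRepair (K : KB CN RN IN) (Rp : Set (Assertion CN RN IN)) : Prop :=
  Rp ⊆ Cstar K ∧ clConsistentS K.tbox Rp ∧
  ∀ Rp' : Set (Assertion CN RN IN), Rp' ⊆ Cstar K → clConsistentS K.tbox Rp' →
    ¬(Rp ∩ K.abox ⊂ Rp' ∩ K.abox) ∧ ¬(Rp ∩ K.abox = Rp' ∩ K.abox ∧ Rp ⊂ Rp')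

def braveEntailsAssert (K : KB CN RN IN) (φ : Assertion CN RN IN) : Prop :=
  ∃ A', IsRepair K A' ∧ clEntailsAssertS K.tbox A' φ

def iarEntailsAssert (K : KB CN RN IN) (φ : Assertion CN RN IN) : Prop :=
  clEntailsAssertS K.tbox (⋂₀ {A' | IsRepair K A'}) φ

def carEntailsAssert (K : KB CN RN IN) (φ : Assertion CN RN IN) : Prop :=
  ∀ Rp, IsClosedRepair K Rp → clEntailsAssertS K.tbox Rp φ

/-- `K ⊨₄ T(A(a))`: `A(a)` is exactly-true entailed. -/
def fourEntailsT (K : KB CN RN IN) (A : CN) (a : IN) : Prop :=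
  (∀ I : FourInterp CN RN IN, I.satKB K → I.ind a ∈ I.cpos A) ∧
  (∃ I : FourInterp CN RN IN, I.satKB K ∧ I.ind a ∈ I.cpos A ∧ I.ind a ∉ I.cneg A)

/-! ### The chase for ELHI_¬ -/

/-- Chase elements: individual names plus fresh successors created by
existential axioms. -/
inductive CE (CN RN IN : Type) : Type where
  | base : IN → CE CN RN IN
  | step : CE CN RN IN → DLAxiom CN RN → CE CN RN IN

mutual
/-- `ChaseC K A d`: the chase of `K` puts element `d` in concept name `A`. -/
inductive ChaseC : KB CN RN IN → CN → CE CN RN IN → Prop where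
  | abox {K : KB CN RN IN} {A a} :
      Assertion.ca A a ∈ K.abox → ChaseC K A (.base a)
  | inter {K : KB CN RN IN} {L₁ L₂ : Concept CN RN} {B d} :
      DLAxiom.cinc (Concept.inter L₁ L₂) (Concept.atom B) ∈ K.tbox →
      (∀ A, L₁ = Concept.atom A → ChaseC K A d) →
      (∀ A, L₂ = Concept.atom A → ChaseC K A d) →
      ChaseC K B d
  | exlName {K : KB CN RN IN} {R : RN} {L : Concept CN RN} {B d e} :
      DLAxiom.cinc (Concept.ex (Role.name R) L) (Concept.atom B) ∈ K.tbox →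
      ChaseR K R d e → (∀ A, L = Concept.atom A → ChaseC K A e) →
      ChaseC K B d
  | exlInv {K : KB CN RN IN} {R : RN} {L : Concept CN RN} {B d e} :
      DLAxiom.cinc (Concept.ex (Role.inv R) L) (Concept.atom B) ∈ K.tbox →
      ChaseR K R e d → (∀ A, L = Concept.atom A → ChaseC K A e) →
      ChaseC K B d
  | exrFill {K : KB CN RN IN} {L : Concept CN RN} {S : Role RN} {B d} :
      DLAxiom.cinc L (Concept.ex S (Concept.atom B)) ∈ K.tbox →
      (∀ A, L = Concept.atom A → ChaseC K A d) →
      ChaseC K B (.step d (DLAxiom.cinc L (Concept.ex S (Concept.atom B))))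

/-- `ChaseR K R d e`: the chase of `K` puts the pair `(d,e)` in role name `R`. -/
inductive ChaseR : KB CN RN IN → RN → CE CN RN IN → CE CN RN IN → Prop where
  | abox {K : KB CN RN IN} {R a b} :
      Assertion.ra R a b ∈ K.abox → ChaseR K R (.base a) (.base b)
  | rincNN {K : KB CN RN IN} {R₁ R₂ d e} :
      DLAxiom.rinc (Role.name R₁) (Role.name R₂) ∈ K.tbox →
      ChaseR K R₁ d e → ChaseR K R₂ d e
  | rincNI {K : KB CN RN IN} {R₁ R₂ d e} :
      DLAxiom.rinc (Role.name R₁) (Role.inv R₂) ∈ K.tbox →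
      ChaseR K R₁ d e → ChaseR K R₂ e d
  | rincIN {K : KB CN RN IN} {R₁ R₂ d e} :
      DLAxiom.rinc (Role.inv R₁) (Role.name R₂) ∈ K.tbox →
      ChaseR K R₁ e d → ChaseR K R₂ d e
  | rincII {K : KB CN RN IN} {R₁ R₂ d e} :
      DLAxiom.rinc (Role.inv R₁) (Role.inv R₂) ∈ K.tbox →
      ChaseR K R₁ e d → ChaseR K R₂ e d
  | exrEdgeName {K : KB CN RN IN} {L Bc : Concept CN RN} {R : RN} {d} :
      DLAxiom.cinc L (Concept.ex (Role.name R) Bc) ∈ K.tbox →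
      (∀ A, L = Concept.atom A → ChaseC K A d) →
      ChaseR K R d (.step d (DLAxiom.cinc L (Concept.ex (Role.name R) Bc)))
  | exrEdgeInv {K : KB CN RN IN} {L Bc : Concept CN RN} {R : RN} {d} :
      DLAxiom.cinc L (Concept.ex (Role.inv R) Bc) ∈ K.tbox →
      (∀ A, L = Concept.atom A → ChaseC K A d) →
      ChaseR K R (.step d (DLAxiom.cinc L (Concept.ex (Role.inv R) Bc))) d
end


/-!
`ELHI_¬` is a Horn logic, so its models are closed under products. Take a 4-model `I` of `K`
and a classical model `M` of `⟨T, A'⟩`, and interpret every concept name `A` by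
`A^{Ip} × A^M`. This is a classical model of `⟨T, A'⟩`: the positive inclusions hold
componentwise, and a disjointness `A ⊑ ¬B` already holds in the `M` factor. A classical match
of `q` in the product then projects to a four-valued match in `I`.
-/

inductive IsEL {CN RN : Type} : Concept CN RN → Prop where
  | top : IsEL Concept.top
  | atom (A : CN) : IsEL (Concept.atom A)
  | inter {C D : Concept CN RN} : IsEL C → IsEL D → IsEL (Concept.inter C D)
  | ex (S : Role RN) {C : Concept CN RN} : IsEL C → IsEL (Concept.ex S C)

lemma AtomTop.isEL {C : Concept CN RN} (h : AtomTop C) : IsEL C := by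
  rcases h with rfl | ⟨A, rfl⟩
  exacts [.top, .atom A]

lemma AtomTopBot.isEL_or_eq_neg {C : Concept CN RN} (h : AtomTopBot C) :
    IsEL C ∨ ∃ B, IsEL B ∧ C = Concept.neg B := by
  rcases h with rfl | rfl | ⟨A, rfl⟩
  exacts [.inl .top, .inr ⟨_, .top, rfl⟩, .inl (.atom A)]

-- `⊥` is `¬⊤`, so it falls under the negated case.
lemma IsELHInegAxiom.cinc_shape {L D : Concept CN RN} (h : IsELHInegAxiom (.cinc L D)) :
    IsEL L ∧ (IsEL D ∨ ∃ B, IsEL B ∧ D = Concept.neg B) := by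
  rcases h with ⟨hL, S, B, hB, rfl⟩ | ⟨⟨S, A, hA, rfl⟩, hD⟩ |
    ⟨⟨A, B, hA, hB, rfl⟩, hD⟩ | ⟨hL, B, hB, rfl⟩
  · exact ⟨hL.isEL, .inl (.ex S hB.isEL)⟩
  · exact ⟨.ex S hA.isEL, hD.isEL_or_eq_neg⟩
  · exact ⟨.inter hA.isEL hB.isEL, hD.isEL_or_eq_neg⟩
  · exact ⟨hL.isEL, .inr ⟨B, hB.isEL, rfl⟩⟩

lemma ClassInterp.mem_ext_ex {J : ClassInterp CN RN IN} {S : Role RN} {C : Concept CN RN}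
    {x : J.Dom} : x ∈ J.ext (Concept.ex S C) ↔ ∃ y, (x, y) ∈ J.rInterp S ∧ y ∈ J.ext C := by
  simp [Concept.ex, ClassInterp.ext]

abbrev FourInterp.prod (I : FourInterp CN RN IN) (M : ClassInterp CN RN IN) :
    ClassInterp CN RN IN where
  Dom := I.Dom × M.Dom
  dom_nonempty := by
    have := I.dom_nonempty
    have := M.dom_nonempty
    infer_instance
  cext A := I.cpos A ×ˢ M.cext A
  rext R := {p | (p.1.1, p.2.1) ∈ I.rext R ∧ (p.1.2, p.2.2) ∈ M.rext R}
  ind a := (I.ind a, M.ind a)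

namespace FourInterp

variable (I : FourInterp CN RN IN) (M : ClassInterp CN RN IN)

lemma prod_rInterp (S : Role RN) :
    (I.prod M).rInterp S = {p | (p.1.1, p.2.1) ∈ I.rInterp S ∧ (p.1.2, p.2.2) ∈ M.rInterp S} := by
  cases S <;> rfl

lemma prod_ext_of_isEL {C : Concept CN RN} (hC : IsEL C) :
    (I.prod M).ext C = I.pExt C ×ˢ M.ext C := by
  induction hC with
  | top => exact Set.univ_prod_univ.symm
  | atom A => rfl
  | @inter C D _ _ ihC ihD =>
    change (I.prod M).ext C ∩ (I.prod M).ext D = (I.pExt C ∩ I.pExt D) ×ˢ (M.ext C ∩ M.ext D)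
    rw [ihC, ihD, Set.prod_inter_prod]
  | ex S _ ih =>
    ext p
    rw [ClassInterp.mem_ext_ex, Set.mem_prod]
    constructor
    · rintro ⟨p', hpp', hp'⟩
      rw [prod_rInterp] at hpp'
      rw [ih] at hp'
      exact ⟨⟨p'.1, hpp'.1, hp'.1⟩, ClassInterp.mem_ext_ex.2 ⟨p'.2, hpp'.2, hp'.2⟩⟩
    · rintro ⟨⟨x', hx, hx'⟩, hy⟩
      obtain ⟨y', hy, hy'⟩ := ClassInterp.mem_ext_ex.1 hy
      refine ⟨(x', y'), ?_, ?_⟩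
      · rw [prod_rInterp]
        exact ⟨hx, hy⟩
      · rw [ih]
        exact ⟨hx', hy'⟩

lemma prod_satAx {ax : DLAxiom CN RN} (hax : IsELHInegAxiom ax) (hI : I.satAx ax)
    (hM : M.satAx ax) : (I.prod M).satAx ax := by
  cases ax with
  | rinc S S' =>
    intro p hp
    rw [prod_rInterp] at hp ⊢
    exact ⟨hI hp.1, hM hp.2⟩
  | cinc L D =>
    obtain ⟨hL, hD | ⟨B, hB, rfl⟩⟩ := hax.cinc_shape
    · show (I.prod M).ext L ⊆ (I.prod M).ext D
      rw [prod_ext_of_isEL I M hL, prod_ext_of_isEL I M hD]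
      exact Set.prod_mono hI hM
    · intro p hp hpB
      rw [prod_ext_of_isEL I M hL] at hp
      rw [prod_ext_of_isEL I M hB] at hpB
      exact hM hp.2 hpB.2

lemma prod_satAssert {α : Assertion CN RN IN} (hI : I.satAssert α) (hM : M.satAssert α) :
    (I.prod M).satAssert α := by
  cases α <;> exact ⟨hI, hM⟩

lemma cqMatch_fst_of_prod {q : CQ CN RN IN V} {π : Term V IN → I.Dom × M.Dom}
    (h : (I.prod M).cqMatch q π) : I.cqMatch q (Prod.fst ∘ π) :=
  ⟨fun c => congrArg Prod.fst (h.1 c), fun p hp => (h.2.1 p hp).1, fun p hp => (h.2.2 p hp).1⟩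

end FourInterp

theorem fourEntailsCQ_of_clEntailsCQS {K : KB CN RN IN} (hK : IsELHInegKB K)
    {A' : Set (Assertion CN RN IN)} (hsub : A' ⊆ K.abox) (hcons : clConsistentS K.tbox A')
    {q : CQ CN RN IN V} (hq : clEntailsCQS K.tbox A' q) : fourEntailsCQ K q := by
  obtain ⟨M, hMT, hMA⟩ := hcons
  intro I hI
  have hprod : (∀ ax ∈ K.tbox, (I.prod M).satAx ax) ∧ (∀ α ∈ A', (I.prod M).satAssert α) :=
    ⟨fun ax hax => I.prod_satAx M (hK ax hax) (hI.1 ax hax) (hMT ax hax),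
      fun α hα => I.prod_satAssert M (hI.2 α (hsub hα)) (hMA α hα)⟩
  obtain ⟨π, hπ⟩ := hq _ hprod
  exact ⟨_, I.cqMatch_fst_of_prod M hπ⟩

/-- for ELHI_¬ KBs with classically consistent TBox,
brave entailment implies four-valued entailment of BCQs. -/
theorem brave_implies_four {CN RN IN V : Type} (K : KB CN RN IN)
    (hK : IsELHInegKB K)
    (hT : clConsistentS K.tbox (∅ : Set (Assertion CN RN IN)))
    (q : CQ CN RN IN V)
    (hbrave : ∃ A', IsRepair K A' ∧ clEntailsCQS K.tbox A' q) :
    fourEntailsCQ K q := by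
  obtain ⟨A', ⟨hsub, hcons, -⟩, hq⟩ := hbrave
  exact fourEntailsCQ_of_clEntailsCQS hK hsub hcons hq

end Para
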